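/- arXiv:2006.05246 — 3 statements merged into one kernel-verified Lean document; each statement's English description precedes it below -/
import Mathlib

section
/- Let f ∈ C¹(ℝ^k, ℝ^k) satisfy f(u)·u ≥ −C₀ for all u ∈ ℝ^k and f′(u)ξ·ξ ≥ −K|ξ|² for all u, ξ ∈ ℝ^k. Then there exist a sequence of functions f_n ∈ C¹(ℝ^k, ℝ^k) and constants C₀′, K′ ≥ 0 such that: (1) f_n(u)·u ≥ −C₀′ for all u ∈ ℝ^k and all n; (2) f_n′(u)ξ·ξ ≥ −K′|ξ|² for all u, ξ ∈ ℝ^k and all n; (3) f_n → f uniformly on every compact subset of ℝ^k; and (4) for every n there is a finite constant C_n with ‖f_n′(u)‖ ≤ C_n for all u ∈ ℝ^k (i.e. each f_n is globally Lipschitz). -/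
/-!
With `A = f + K • id`, whose derivative is monotone, every map `I + t A` with `t ≥ 0` has
derivative `≥ I`. Such a map is antilipschitz, hence proper, so its range is closed; the range is
also open by the inverse function theorem. It is therefore a `C¹` diffeomorphism of `ℝᵏ`, and its
inverse, the resolvent `J_t`, is `1`-Lipschitz. The approximants are `f ∘ J_t` with
`t = 1 / (n + 1)`. Writing `u = x + t (b + K x)`, the identity
`⟪b, u⟫ = (1 + t K) ⟪b, x⟫ + t ‖b‖²` transfers the lower bounds on `⟪f x, x⟫` and on
`⟪f' x η, η⟫` to `f ∘ J_t` at the cost of a factor `1 + K`, and solving it for `t b` bounds the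
derivative of `f ∘ J_t` by `2 / t + K`. Finally `u - J_t u = t A (J_t u)` is `O(t)` uniformly on
compact sets.
-/

open Set Filter Function
open scoped RealInnerProductSpace Topology

section CoerciveDerivative

variable {E : Type*} [NormedAddCommGroup E] [InnerProductSpace ℝ E] {G : E → E}

theorem norm_le_of_sq_norm_le_inner {v w : E} (h : ‖v‖ ^ 2 ≤ ⟪w, v⟫) : ‖v‖ ≤ ‖w‖ := by
  nlinarith [real_inner_le_norm w v, norm_nonneg v, norm_nonneg w]

theorem sq_norm_sub_le_inner_sub_of_fderiv (hG : Differentiable ℝ G)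
    (hcoer : ∀ x ξ, ‖ξ‖ ^ 2 ≤ ⟪fderiv ℝ G x ξ, ξ⟫) (x y : E) :
    ‖x - y‖ ^ 2 ≤ ⟪G x - G y, x - y⟫ := by
  set φ : ℝ → ℝ := fun t => ⟪G (y + t • (x - y)), x - y⟫ - t * ‖x - y‖ ^ 2
  have hφ : ∀ t, HasDerivAt φ
      (⟪fderiv ℝ G (y + t • (x - y)) (x - y), x - y⟫ - ‖x - y‖ ^ 2) t := by
    intro t
    have hline : HasDerivAt (fun t : ℝ => y + t • (x - y)) (x - y) t := by
      simpa using ((hasDerivAt_id t).smul_const (x - y)).const_add y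
    have hGline := (hG _).hasFDerivAt.comp_hasDerivAt t hline
    have hinner : HasDerivAt (fun t : ℝ => ⟪G (y + t • (x - y)), x - y⟫)
        ⟪fderiv ℝ G (y + t • (x - y)) (x - y), x - y⟫ t := by
      simpa using hGline.inner ℝ (hasDerivAt_const t (x - y))
    exact hinner.sub (by simpa using (hasDerivAt_id t).mul_const (‖x - y‖ ^ 2))
  have hφ_mono : Monotone φ :=
    monotone_of_hasDerivAt_nonneg hφ fun t => sub_nonneg.mpr (hcoer _ _)
  have h01 := hφ_mono zero_le_one
  simp only [φ, zero_smul, add_zero, one_smul, add_sub_cancel, zero_mul, sub_zero,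
    one_mul] at h01
  rw [inner_sub_left]
  linarith

theorem antilipschitzWith_one_of_fderiv (hG : Differentiable ℝ G)
    (hcoer : ∀ x ξ, ‖ξ‖ ^ 2 ≤ ⟪fderiv ℝ G x ξ, ξ⟫) : AntilipschitzWith 1 G :=
  AntilipschitzWith.of_le_mul_dist fun x y => by
    simpa [dist_eq_norm] using
      norm_le_of_sq_norm_le_inner (sq_norm_sub_le_inner_sub_of_fderiv hG hcoer x y)

theorem exists_continuousLinearEquiv_of_sq_norm_le_inner [FiniteDimensional ℝ E]
    (T : E →L[ℝ] E) (hT : ∀ ξ, ‖ξ‖ ^ 2 ≤ ⟪T ξ, ξ⟫) :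
    ∃ e : E ≃L[ℝ] E, (e : E →L[ℝ] E) = T := by
  have hinj : Injective T := (injective_iff_map_eq_zero T).mpr fun ξ hξ => by
    simpa [hξ] using hT ξ
  exact ⟨(LinearEquiv.ofInjectiveEndo T.toLinearMap hinj).toContinuousLinearEquiv, rfl⟩

variable [FiniteDimensional ℝ E]

theorem isOpenMap_of_fderiv (hG : ContDiff ℝ 1 G)
    (hcoer : ∀ x ξ, ‖ξ‖ ^ 2 ≤ ⟪fderiv ℝ G x ξ, ξ⟫) : IsOpenMap G := by
  choose e he using fun x => exists_continuousLinearEquiv_of_sq_norm_le_inner _ (hcoer x)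
  exact isOpenMap_of_hasStrictFDerivAt_equiv fun x => by
    rw [he]
    exact hG.contDiffAt.hasStrictFDerivAt one_ne_zero

theorem surjective_of_fderiv (hG : ContDiff ℝ 1 G)
    (hcoer : ∀ x ξ, ‖ξ‖ ^ 2 ≤ ⟪fderiv ℝ G x ξ, ξ⟫) : Surjective G := by
  have hanti := antilipschitzWith_one_of_fderiv (hG.differentiable one_ne_zero) hcoer
  have hproper : IsProperMap G := isProperMap_iff_tendsto_cocompact.mpr
    ⟨hG.continuous, by simpa only [Metric.cobounded_eq_cocompact] using hanti.tendsto_cobounded⟩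
  have hclopen : IsClopen (range G) :=
    ⟨hproper.isClosed_range, (isOpenMap_of_fderiv hG hcoer).isOpen_range⟩
  exact range_eq_univ.mp (hclopen.eq_univ (range_nonempty G))

theorem contDiff_invFun_of_fderiv (hG : ContDiff ℝ 1 G)
    (hcoer : ∀ x ξ, ‖ξ‖ ^ 2 ≤ ⟪fderiv ℝ G x ξ, ξ⟫) : ContDiff ℝ 1 (invFun G) := by
  choose e he using fun x => exists_continuousLinearEquiv_of_sq_norm_le_inner _ (hcoer x)
  have hinj := (antilipschitzWith_one_of_fderiv (hG.differentiable one_ne_zero) hcoer).injective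
  have hsurj := surjective_of_fderiv hG hcoer
  let h : E ≃ₜ E := (Equiv.ofBijective G ⟨hinj, hsurj⟩).toHomeomorphOfContinuousOpen
    hG.continuous (isOpenMap_of_fderiv hG hcoer)
  have hsymm : invFun G = h.symm := funext fun u =>
    hinj ((rightInverse_invFun hsurj u).trans (h.apply_symm_apply u).symm)
  rw [hsymm]
  refine h.contDiff_symm (f₀' := e) (fun x => ?_) hG
  rw [he]
  exact (hG.differentiable one_ne_zero x).hasFDerivAt

theorem fderiv_apply_fderiv_invFun (hG : ContDiff ℝ 1 G)
    (hcoer : ∀ x ξ, ‖ξ‖ ^ 2 ≤ ⟪fderiv ℝ G x ξ, ξ⟫) (u ξ : E) :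
    fderiv ℝ G (invFun G u) (fderiv ℝ (invFun G) u ξ) = ξ := by
  have hGJ : G ∘ invFun G = id := funext (rightInverse_invFun (surjective_of_fderiv hG hcoer))
  have hchain := fderiv_comp u (hG.differentiable one_ne_zero _)
    ((contDiff_invFun_of_fderiv hG hcoer).differentiable one_ne_zero u)
  rw [hGJ, fderiv_id] at hchain
  exact (congrArg (· ξ) hchain).symm

end CoerciveDerivative

section Resolvent

variable {E : Type*} [NormedAddCommGroup E] [InnerProductSpace ℝ E] {A : E → E} {t : ℝ}

/-- The resolvent `(I + t A)⁻¹` of `A`; `invFun` makes it a junk value unless `I + t A` is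
bijective. -/
noncomputable def nonlinearResolvent (A : E → E) (t : ℝ) : E → E :=
  invFun fun x => x + t • A x

theorem fderiv_id_add_smul_apply (hA : Differentiable ℝ A) (x ξ : E) :
    fderiv ℝ (fun x => x + t • A x) x ξ = ξ + t • fderiv ℝ A x ξ := by
  have hderiv : HasFDerivAt (fun x => x + t • A x)
      (ContinuousLinearMap.id ℝ E + t • fderiv ℝ A x) x :=
    (hasFDerivAt_id x).add ((hA x).hasFDerivAt.const_smul t)
  rw [hderiv.fderiv]
  rfl

theorem sq_norm_le_inner_fderiv_id_add_smul (hA : Differentiable ℝ A)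
    (hmono : ∀ x ξ, 0 ≤ ⟪fderiv ℝ A x ξ, ξ⟫) (ht : 0 ≤ t) (x ξ : E) :
    ‖ξ‖ ^ 2 ≤ ⟪fderiv ℝ (fun x => x + t • A x) x ξ, ξ⟫ := by
  rw [fderiv_id_add_smul_apply hA, inner_add_left, real_inner_smul_left,
    real_inner_self_eq_norm_sq]
  nlinarith [hmono x ξ]

theorem nonlinearResolvent_apply_add_smul (hA : Differentiable ℝ A)
    (hmono : ∀ x ξ, 0 ≤ ⟪fderiv ℝ A x ξ, ξ⟫) (ht : 0 ≤ t) (x : E) :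
    nonlinearResolvent A t (x + t • A x) = x :=
  leftInverse_invFun (antilipschitzWith_one_of_fderiv (by fun_prop)
    (sq_norm_le_inner_fderiv_id_add_smul hA hmono ht)).injective x

variable [FiniteDimensional ℝ E]

theorem nonlinearResolvent_add_smul (hA : ContDiff ℝ 1 A)
    (hmono : ∀ x ξ, 0 ≤ ⟪fderiv ℝ A x ξ, ξ⟫) (ht : 0 ≤ t) (u : E) :
    nonlinearResolvent A t u + t • A (nonlinearResolvent A t u) = u :=
  rightInverse_invFun (surjective_of_fderiv (by fun_prop)
    (sq_norm_le_inner_fderiv_id_add_smul (hA.differentiable one_ne_zero) hmono ht)) u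

theorem lipschitzWith_one_nonlinearResolvent (hA : ContDiff ℝ 1 A)
    (hmono : ∀ x ξ, 0 ≤ ⟪fderiv ℝ A x ξ, ξ⟫) (ht : 0 ≤ t) :
    LipschitzWith 1 (nonlinearResolvent A t) :=
  (antilipschitzWith_one_of_fderiv (by fun_prop)
    (sq_norm_le_inner_fderiv_id_add_smul (hA.differentiable one_ne_zero) hmono ht)).to_rightInverse
    (nonlinearResolvent_add_smul hA hmono ht)

theorem contDiff_nonlinearResolvent (hA : ContDiff ℝ 1 A)
    (hmono : ∀ x ξ, 0 ≤ ⟪fderiv ℝ A x ξ, ξ⟫) (ht : 0 ≤ t) :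
    ContDiff ℝ 1 (nonlinearResolvent A t) :=
  contDiff_invFun_of_fderiv (by fun_prop)
    (sq_norm_le_inner_fderiv_id_add_smul (hA.differentiable one_ne_zero) hmono ht)

theorem fderiv_nonlinearResolvent_add_smul (hA : ContDiff ℝ 1 A)
    (hmono : ∀ x ξ, 0 ≤ ⟪fderiv ℝ A x ξ, ξ⟫) (ht : 0 ≤ t) (u ξ : E) :
    fderiv ℝ (nonlinearResolvent A t) u ξ
      + t • fderiv ℝ A (nonlinearResolvent A t u) (fderiv ℝ (nonlinearResolvent A t) u ξ) = ξ := by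
  rw [← fderiv_id_add_smul_apply (hA.differentiable one_ne_zero)]
  exact fderiv_apply_fderiv_invFun (by fun_prop)
    (sq_norm_le_inner_fderiv_id_add_smul (hA.differentiable one_ne_zero) hmono ht) u ξ

theorem mapsTo_nonlinearResolvent_closedBall (hA : ContDiff ℝ 1 A)
    (hmono : ∀ x ξ, 0 ≤ ⟪fderiv ℝ A x ξ, ξ⟫) (ht₀ : 0 ≤ t) (ht₁ : t ≤ 1) (R : ℝ) :
    MapsTo (nonlinearResolvent A t) (Metric.closedBall 0 R)
      (Metric.closedBall 0 (R + ‖A 0‖)) := by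
  intro u hu
  have hzero : nonlinearResolvent A t (t • A 0) = 0 := by
    simpa using nonlinearResolvent_apply_add_smul (hA.differentiable one_ne_zero) hmono ht₀ 0
  rw [mem_closedBall_zero_iff] at hu ⊢
  calc ‖nonlinearResolvent A t u‖
      = dist (nonlinearResolvent A t u) (nonlinearResolvent A t (t • A 0)) := by
        rw [hzero, dist_zero_right]
    _ ≤ dist u (t • A 0) := by
        simpa using (lipschitzWith_one_nonlinearResolvent hA hmono ht₀).dist_le_mul u (t • A 0)
    _ ≤ ‖u‖ + ‖t • A 0‖ := by rw [dist_eq_norm]; exact norm_sub_le _ _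
    _ ≤ R + ‖A 0‖ := by
        rw [norm_smul, Real.norm_of_nonneg ht₀]
        gcongr
        exact mul_le_of_le_one_left (norm_nonneg _) ht₁

theorem tendstoUniformlyOn_nonlinearResolvent (hA : ContDiff ℝ 1 A)
    (hmono : ∀ x ξ, 0 ≤ ⟪fderiv ℝ A x ξ, ξ⟫) {s : Set E} (hs : IsCompact s) :
    TendstoUniformlyOn (nonlinearResolvent A) id (𝓝[>] 0) s := by
  obtain ⟨R, hR⟩ := hs.isBounded.subset_closedBall 0
  obtain ⟨M, hM⟩ := (isCompact_closedBall (0 : E) (R + ‖A 0‖)).exists_bound_of_continuousOn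
    hA.continuous.continuousOn
  have hclose : ∀ t ∈ Ioc (0 : ℝ) 1, ∀ u ∈ s, dist u (nonlinearResolvent A t u) ≤ t * M := by
    rintro t ⟨ht₀, ht₁⟩ u hu
    rw [dist_eq_norm, sub_eq_iff_eq_add'.mpr (nonlinearResolvent_add_smul hA hmono ht₀.le u).symm,
      norm_smul, Real.norm_of_nonneg ht₀.le]
    exact mul_le_mul_of_nonneg_left
      (hM _ (mapsTo_nonlinearResolvent_closedBall hA hmono ht₀.le ht₁ R (hR hu))) ht₀.le
  have hsmall : Tendsto (fun t => t * M) (𝓝[>] 0) (𝓝 0) := by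
    simpa using ((continuous_mul_const M).tendsto 0).mono_left nhdsWithin_le_nhds
  rw [Metric.tendstoUniformlyOn_iff]
  intro ε hε
  filter_upwards [Ioc_mem_nhdsGT zero_lt_one, hsmall.eventually (gt_mem_nhds hε)] with t ht hεt
    u hu
  exact (hclose t ht u hu).trans_lt hεt

theorem tendstoUniformlyOn_comp_nonlinearResolvent {F : Type*} [UniformSpace F] {g : E → F}
    (hg : Continuous g) (hA : ContDiff ℝ 1 A) (hmono : ∀ x ξ, 0 ≤ ⟪fderiv ℝ A x ξ, ξ⟫)
    {s : Set E} (hs : IsCompact s) :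
    TendstoUniformlyOn (fun t => g ∘ nonlinearResolvent A t) g (𝓝[>] 0) s := by
  obtain ⟨R, hR⟩ := hs.isBounded.subset_closedBall 0
  have hball : Metric.closedBall (0 : E) R ⊆ Metric.closedBall 0 (R + ‖A 0‖) :=
    Metric.closedBall_subset_closedBall (le_add_of_nonneg_right (norm_nonneg _))
  have hmaps : ∀ᶠ t in 𝓝[>] (0 : ℝ), ∀ u ∈ s,
      nonlinearResolvent A t u ∈ Metric.closedBall 0 (R + ‖A 0‖) := by
    filter_upwards [Ioc_mem_nhdsGT zero_lt_one] with t ht u hu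
    exact mapsTo_nonlinearResolvent_closedBall hA hmono ht.1.le ht.2 R (hR hu)
  exact ((isCompact_closedBall _ _).uniformContinuousOn_of_continuous hg.continuousOn
    ).comp_tendstoUniformlyOn_eventually hmaps (fun u hu => hball (hR hu))
    (tendstoUniformlyOn_nonlinearResolvent hA hmono hs)

end Resolvent

section QuasiMonotone

variable {E : Type*} [NormedAddCommGroup E] [InnerProductSpace ℝ E] {f : E → E} {K t : ℝ}

theorem inner_add_smul_add_smul (b x : E) (t K : ℝ) :
    ⟪b, x + t • (b + K • x)⟫ = (1 + t * K) * ⟪b, x⟫ + t * ‖b‖ ^ 2 := by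
  rw [inner_add_right, real_inner_smul_right, inner_add_right, real_inner_smul_right,
    real_inner_self_eq_norm_sq]
  ring

theorem fderiv_add_smul_id_apply (hf : Differentiable ℝ f) (x ξ : E) :
    fderiv ℝ (fun x => f x + K • x) x ξ = fderiv ℝ f x ξ + K • ξ := by
  have hderiv : HasFDerivAt (fun x => f x + K • x)
      (fderiv ℝ f x + K • ContinuousLinearMap.id ℝ E) x :=
    (hf x).hasFDerivAt.add ((hasFDerivAt_id x).const_smul K)
  rw [hderiv.fderiv]
  rfl

theorem inner_fderiv_add_smul_id_nonneg (hf : Differentiable ℝ f)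
    (hmon : ∀ x ξ, -(K * ‖ξ‖ ^ 2) ≤ ⟪fderiv ℝ f x ξ, ξ⟫) (x ξ : E) :
    0 ≤ ⟪fderiv ℝ (fun x => f x + K • x) x ξ, ξ⟫ := by
  rw [fderiv_add_smul_id_apply hf, inner_add_left, real_inner_smul_left,
    real_inner_self_eq_norm_sq]
  linarith [hmon x ξ]

variable [FiniteDimensional ℝ E]

theorem neg_mul_le_inner_comp_nonlinearResolvent {C₀ : ℝ} (hf : ContDiff ℝ 1 f) (hK : 0 ≤ K)
    (hmon : ∀ x ξ, -(K * ‖ξ‖ ^ 2) ≤ ⟪fderiv ℝ f x ξ, ξ⟫) (hC₀ : 0 ≤ C₀)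
    (hdis : ∀ v, -C₀ ≤ ⟪f v, v⟫) (ht₀ : 0 ≤ t) (ht₁ : t ≤ 1) (u : E) :
    -(C₀ * (1 + K)) ≤ ⟪f (nonlinearResolvent (fun x => f x + K • x) t u), u⟫ := by
  set x := nonlinearResolvent (fun x => f x + K • x) t u
  have hu : x + t • (f x + K • x) = u := nonlinearResolvent_add_smul (by fun_prop)
    (inner_fderiv_add_smul_id_nonneg (hf.differentiable one_ne_zero) hmon) ht₀ u
  have htK : t * K ≤ K := mul_le_of_le_one_left hK ht₁
  have hdis' := mul_le_mul_of_nonneg_left (hdis x) (by positivity : 0 ≤ 1 + t * K)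
  rw [← hu, inner_add_smul_add_smul]
  nlinarith [mul_nonneg ht₀ (sq_nonneg ‖f x‖)]

theorem exists_fderiv_comp_nonlinearResolvent_apply (hf : ContDiff ℝ 1 f)
    (hmon : ∀ x ξ, -(K * ‖ξ‖ ^ 2) ≤ ⟪fderiv ℝ f x ξ, ξ⟫) (ht : 0 ≤ t) (u ξ : E) :
    ∃ x η : E, fderiv ℝ (f ∘ nonlinearResolvent (fun x => f x + K • x) t) u ξ = fderiv ℝ f x η ∧
      η + t • (fderiv ℝ f x η + K • η) = ξ ∧ ‖η‖ ≤ ‖ξ‖ := by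
  have hf' := hf.differentiable one_ne_zero
  have hA : ContDiff ℝ 1 fun x => f x + K • x := by fun_prop
  have hmono := inner_fderiv_add_smul_id_nonneg hf' hmon
  set J := nonlinearResolvent (fun x => f x + K • x) t
  have hJ := (contDiff_nonlinearResolvent hA hmono ht).differentiable one_ne_zero
  refine ⟨J u, fderiv ℝ J u ξ, ?_, ?_, ?_⟩
  · rw [fderiv_comp u (hf' _) (hJ u), ContinuousLinearMap.comp_apply]
  · rw [← fderiv_add_smul_id_apply hf']
    exact fderiv_nonlinearResolvent_add_smul hA hmono ht u ξ
  · calc ‖fderiv ℝ J u ξ‖ ≤ ‖fderiv ℝ J u‖ * ‖ξ‖ := (fderiv ℝ J u).le_opNorm ξ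
      _ ≤ 1 * ‖ξ‖ := by
        gcongr
        exact_mod_cast norm_fderiv_le_of_lipschitz ℝ
          (lipschitzWith_one_nonlinearResolvent hA hmono ht)
      _ = ‖ξ‖ := one_mul _

theorem neg_mul_sq_norm_le_inner_fderiv_comp_nonlinearResolvent (hf : ContDiff ℝ 1 f)
    (hK : 0 ≤ K) (hmon : ∀ x ξ, -(K * ‖ξ‖ ^ 2) ≤ ⟪fderiv ℝ f x ξ, ξ⟫) (ht₀ : 0 ≤ t) (ht₁ : t ≤ 1)
    (u ξ : E) :
    -(K * (1 + K) * ‖ξ‖ ^ 2) ≤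
      ⟪fderiv ℝ (f ∘ nonlinearResolvent (fun x => f x + K • x) t) u ξ, ξ⟫ := by
  obtain ⟨x, η, hcomp, hξ, hηξ⟩ := exists_fderiv_comp_nonlinearResolvent_apply hf hmon ht₀ u ξ
  have htK : t * K ≤ K := mul_le_of_le_one_left hK ht₁
  have hsq : K * ‖η‖ ^ 2 ≤ K * ‖ξ‖ ^ 2 :=
    mul_le_mul_of_nonneg_left (pow_le_pow_left₀ (norm_nonneg η) hηξ 2) hK
  have hgrow : (1 + t * K) * (K * ‖η‖ ^ 2) ≤ (1 + K) * (K * ‖ξ‖ ^ 2) :=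
    mul_le_mul (by linarith) hsq (by positivity) (by positivity)
  have hmon' := mul_le_mul_of_nonneg_left (hmon x η) (by positivity : 0 ≤ 1 + t * K)
  have hexpand : ⟪fderiv ℝ f x η, ξ⟫
      = (1 + t * K) * ⟪fderiv ℝ f x η, η⟫ + t * ‖fderiv ℝ f x η‖ ^ 2 := by
    rw [← hξ, inner_add_smul_add_smul]
  rw [hcomp, hexpand]
  nlinarith [mul_nonneg ht₀ (sq_nonneg ‖fderiv ℝ f x η‖)]

theorem norm_fderiv_comp_nonlinearResolvent_le (hf : ContDiff ℝ 1 f) (hK : 0 ≤ K)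
    (hmon : ∀ x ξ, -(K * ‖ξ‖ ^ 2) ≤ ⟪fderiv ℝ f x ξ, ξ⟫) (ht : 0 < t) (u : E) :
    ‖fderiv ℝ (f ∘ nonlinearResolvent (fun x => f x + K • x) t) u‖ ≤ 2 / t + K := by
  refine ContinuousLinearMap.opNorm_le_bound _ (by positivity) fun ξ => ?_
  obtain ⟨x, η, hcomp, hξ, hηξ⟩ := exists_fderiv_comp_nonlinearResolvent_apply hf hmon ht.le u ξ
  have hsmul : t • fderiv ℝ f x η = ξ - η - (t * K) • η := by
    rw [← hξ]
    module
  have hbound : t * ‖fderiv ℝ f x η‖ ≤ t * ((2 / t + K) * ‖ξ‖) := by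
    calc t * ‖fderiv ℝ f x η‖ = ‖ξ - η - (t * K) • η‖ := by
          rw [← hsmul, norm_smul, Real.norm_of_nonneg ht.le]
      _ ≤ ‖ξ‖ + ‖η‖ + t * K * ‖η‖ := by
          refine (norm_sub_le _ _).trans ?_
          rw [norm_smul, Real.norm_of_nonneg (by positivity)]
          gcongr
          exact norm_sub_le _ _
      _ ≤ ‖ξ‖ + ‖ξ‖ + t * K * ‖ξ‖ := by gcongr
      _ = t * ((2 / t + K) * ‖ξ‖) := by field_simp; ring
  rw [hcomp]
  exact le_of_mul_le_mul_left hbound ht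

end QuasiMonotone

theorem statement6_general (k : ℕ)
    (f : EuclideanSpace ℝ (Fin k) → EuclideanSpace ℝ (Fin k))
    (C₀ K : ℝ) (hK : 0 ≤ K)
    (hf : ContDiff ℝ 1 f)
    (hdis : ∀ v, -C₀ ≤ ⟪f v, v⟫)
    (hmon : ∀ v ξ, -(K * ‖ξ‖ ^ 2) ≤ ⟪fderiv ℝ f v ξ, ξ⟫) :
    ∃ (fn : ℕ → EuclideanSpace ℝ (Fin k) → EuclideanSpace ℝ (Fin k)) (C₀' K' : ℝ),
      0 ≤ C₀' ∧ 0 ≤ K' ∧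
      (∀ n, ContDiff ℝ 1 (fn n)) ∧
      (∀ n v, -C₀' ≤ ⟪fn n v, v⟫) ∧
      (∀ n v ξ, -(K' * ‖ξ‖ ^ 2) ≤ ⟪fderiv ℝ (fn n) v ξ, ξ⟫) ∧
      (∀ s : Set (EuclideanSpace ℝ (Fin k)), IsCompact s →
        TendstoUniformlyOn (fun n => fn n) f atTop s) ∧
      (∀ n, ∃ Cn : ℝ, ∀ v, ‖fderiv ℝ (fn n) v‖ ≤ Cn) := by
  have hC₀ : 0 ≤ C₀ := by simpa using hdis 0
  have hA : ContDiff ℝ 1 fun x => f x + K • x := by fun_prop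
  have hmono := inner_fderiv_add_smul_id_nonneg (hf.differentiable one_ne_zero) hmon
  set t : ℕ → ℝ := fun n => 1 / (n + 1)
  have ht₀ : ∀ n, 0 < t n := fun n => by positivity
  have ht₁ : ∀ n, t n ≤ 1 := fun n => div_le_one_of_le₀ (by simp) (by positivity)
  have ht : Tendsto t atTop (𝓝[>] 0) := tendsto_nhdsWithin_iff.mpr
    ⟨tendsto_one_div_add_atTop_nhds_zero_nat, Eventually.of_forall ht₀⟩
  refine ⟨fun n => f ∘ nonlinearResolvent (fun x => f x + K • x) (t n), C₀ * (1 + K),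
    K * (1 + K), by positivity, by positivity,
    fun n => hf.comp (contDiff_nonlinearResolvent hA hmono (ht₀ n).le),
    fun n => neg_mul_le_inner_comp_nonlinearResolvent hf hK hmon hC₀ hdis (ht₀ n).le (ht₁ n),
    fun n => neg_mul_sq_norm_le_inner_fderiv_comp_nonlinearResolvent hf hK hmon (ht₀ n).le (ht₁ n),
    fun s hs => ?_, fun n => ⟨2 / t n + K, ?_⟩⟩
  · exact (tendstoUniformlyOn_comp_nonlinearResolvent hf.continuous hA hmono hs
      ).seq_tendstoUniformlyOn t ht
  · exact norm_fderiv_comp_nonlinearResolvent_le hf hK hmon (ht₀ n)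

/-- Lemma 4.1: approximation of a dissipative, quasi-monotone `C¹` nonlinearity by
globally Lipschitz ones satisfying the same structural assumptions uniformly. -/
theorem statement6 (k : ℕ) (hk : 1 ≤ k)
    (f : EuclideanSpace ℝ (Fin k) → EuclideanSpace ℝ (Fin k))
    (C₀ K : ℝ) (hC₀ : 0 ≤ C₀) (hK : 0 ≤ K)
    (hf : ContDiff ℝ 1 f)
    (hdis : ∀ v, -C₀ ≤ ⟪f v, v⟫)
    (hmon : ∀ v ξ, -(K * ‖ξ‖ ^ 2) ≤ ⟪fderiv ℝ f v ξ, ξ⟫) :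
    ∃ (fn : ℕ → EuclideanSpace ℝ (Fin k) → EuclideanSpace ℝ (Fin k)) (C₀' K' : ℝ),
      0 ≤ C₀' ∧ 0 ≤ K' ∧
      (∀ n, ContDiff ℝ 1 (fn n)) ∧
      (∀ n v, -C₀' ≤ ⟪fn n v, v⟫) ∧
      (∀ n v ξ, -(K' * ‖ξ‖ ^ 2) ≤ ⟪fderiv ℝ (fn n) v ξ, ξ⟫) ∧
      (∀ s : Set (EuclideanSpace ℝ (Fin k)), IsCompact s →
        TendstoUniformlyOn (fun n => fn n) f atTop s) ∧
      (∀ n, ∃ Cn : ℝ, ∀ v, ‖fderiv ℝ (fn n) v‖ ≤ Cn) :=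
  statement6_general k f C₀ K hK hf hdis hmon
end

section
/- Let d > 0, κ ∈ (0, 2), p > 1 be real numbers and let q₀ > d(p−1)/(2−κ) be a positive real number. Define recursively q_{k+1} = q_k · d / (p·d − q_k·(2−κ)), the recursion being defined as long as p·d − q_k·(2−κ) > 0. Then q_{k+1} > q_k whenever q_{k+1} is defined, and for every M > 0 there exists an index k such that either p·d − q_j·(2−κ) ≤ 0 for some j ≤ k (so the recursion terminates), or q_k > M. In particular the sequence cannot remain bounded. -/
open Set

/-- The exponent-bootstrap recursion: it is strictly increasing while defined,
and cannot remain bounded. -/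
theorem statement14 (d κ p q₀ : ℝ) (hd : 0 < d) (hκ : κ ∈ Ioo (0 : ℝ) 2)
    (hp : 1 < p) (hq₀pos : 0 < q₀) (hq₀ : d * (p - 1) / (2 - κ) < q₀)
    (q : ℕ → ℝ) (hq_init : q 0 = q₀)
    (hq_rec : ∀ n, 0 < p * d - q n * (2 - κ) →
      q (n + 1) = q n * d / (p * d - q n * (2 - κ))) :
    (∀ n, (∀ j ≤ n, 0 < p * d - q j * (2 - κ)) → q n < q (n + 1)) ∧
    (∀ M > (0 : ℝ), ∃ n, (∃ j ≤ n, p * d - q j * (2 - κ) ≤ 0) ∨ M < q n) := by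
  obtain ⟨hκ0, hκ2⟩ := hκ
  have h2κ : 0 < 2 - κ := by linarith
  have hkey : d * (p - 1) < q₀ * (2 - κ) := by
    have := (div_lt_iff₀ h2κ).mp hq₀
    linarith
  -- q₀ ≤ q n while the recursion is defined
  have hge : ∀ n, (∀ j ≤ n, 0 < p * d - q j * (2 - κ)) → q₀ ≤ q n := by
    intro n
    induction n with
    | zero => intro _; rw [hq_init]
    | succ n ih =>
      intro hpos
      have hqn : q₀ ≤ q n := ih (fun j hj => hpos j (hj.trans (Nat.le_succ n)))
      have hDn : 0 < p * d - q n * (2 - κ) := hpos n (Nat.le_succ n)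
      have hDlt : p * d - q n * (2 - κ) < d := by nlinarith
      rw [hq_rec n hDn]
      have hqnpos : 0 < q n := lt_of_lt_of_le hq₀pos hqn
      have : q n ≤ q n * d / (p * d - q n * (2 - κ)) := by
        rw [le_div_iff₀ hDn]; nlinarith
      linarith
  -- part 1
  have part1 : ∀ n, (∀ j ≤ n, 0 < p * d - q j * (2 - κ)) → q n < q (n + 1) := by
    intro n hpos
    have hqn : q₀ ≤ q n := hge n hpos
    have hDn : 0 < p * d - q n * (2 - κ) := hpos n le_rfl
    have hDlt : p * d - q n * (2 - κ) < d := by nlinarith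
    rw [hq_rec n hDn, lt_div_iff₀ hDn]
    nlinarith
  refine ⟨part1, ?_⟩
  intro M hM
  by_cases hc : 0 < p * d - q₀ * (2 - κ)
  · set c := p * d - q₀ * (2 - κ) with hcdef
    set r := d / c with hrdef
    have hr1 : 1 < r := by
      rw [hrdef, lt_div_iff₀ hc]; nlinarith
    -- geometric growth while defined
    have hgrow : ∀ n, (∀ j ≤ n, 0 < p * d - q j * (2 - κ)) → q₀ * r ^ n ≤ q n := by
      intro n
      induction n with
      | zero => intro _; simp [hq_init]
      | succ n ih =>
        intro hpos
        have hqn : q₀ * r ^ n ≤ q n := ih (fun j hj => hpos j (hj.trans (Nat.le_succ n)))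
        have hqn0 : q₀ ≤ q n := hge n (fun j hj => hpos j (hj.trans (Nat.le_succ n)))
        have hDn : 0 < p * d - q n * (2 - κ) := hpos n (Nat.le_succ n)
        have hDc : p * d - q n * (2 - κ) ≤ c := by rw [hcdef]; nlinarith
        rw [hq_rec n hDn]
        have hqnpos : 0 < q n := lt_of_lt_of_le hq₀pos hqn0
        have h1 : q n * r ≤ q n * d / (p * d - q n * (2 - κ)) := by
          rw [hrdef, mul_div_assoc]
          gcongr <;> first | exact hqnpos.le | exact hd.le | exact hDn | exact hDc
        have h2 : q₀ * r ^ (n + 1) ≤ q n * r := by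
          rw [pow_succ, ← mul_assoc]
          have hr0 : 0 < r := lt_trans one_pos hr1
          nlinarith
        linarith
    obtain ⟨n, hn⟩ := pow_unbounded_of_one_lt (M / q₀) hr1
    refine ⟨n, ?_⟩
    by_cases hall : ∀ j ≤ n, 0 < p * d - q j * (2 - κ)
    · right
      have := hgrow n hall
      have : M < q₀ * r ^ n := by
        rw [← div_lt_iff₀' hq₀pos] at *
        linarith [mul_comm q₀ (r ^ n)]
      linarith [hgrow n hall]
    · left
      push_neg at hall
      obtain ⟨j, hj, hjle⟩ := hall
      exact ⟨j, hj, hjle⟩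
  · exact ⟨0, Or.inl ⟨0, le_rfl, by rw [hq_init]; linarith⟩⟩
end

section
/- Let f ∈ C¹(ℝ^k, ℝ^k) satisfy: (i) ‖f′(u)‖ ≤ C(1 + |f(u)| + |u|) for all u ∈ ℝ^k, and (ii) there exist a convex function Ψ : ℝ^k → ℝ and constants C₁, C₂ > 0 with C₂(Ψ(u) − 1 − |u|²) ≤ |f(u)|² ≤ C₁(Ψ(u) + |u|² + 1) for all u ∈ ℝ^k. Then there exists a constant C′ > 0 such that for all u₁, u₂ ∈ ℝ^k and all s ∈ [0, 1], ‖f′(s·u₁ + (1−s)·u₂)‖² ≤ C′( |f(u₁)|² + |f(u₂)|² + |u₁|² + |u₂|² + 1 ). -/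
open Set
open scoped RealInnerProductSpace

set_option maxHeartbeats 1000000 in
/-- Control of `f′` along segments, under condition (0.fp) and the convexity
sandwich for `|f(u)|²`. -/
theorem statement16 (k : ℕ) (hk : 1 ≤ k)
    (f : EuclideanSpace ℝ (Fin k) → EuclideanSpace ℝ (Fin k))
    (hf : ContDiff ℝ 1 f)
    (C C₁ C₂ : ℝ) (hC : 0 ≤ C) (hC₁ : 0 < C₁) (hC₂ : 0 < C₂)
    (hfp : ∀ v, ‖fderiv ℝ f v‖ ≤ C * (1 + ‖f v‖ + ‖v‖))
    (Ψ : EuclideanSpace ℝ (Fin k) → ℝ) (hΨ : ConvexOn ℝ univ Ψ)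
    (hlow : ∀ v, C₂ * (Ψ v - 1 - ‖v‖ ^ 2) ≤ ‖f v‖ ^ 2)
    (hup : ∀ v, ‖f v‖ ^ 2 ≤ C₁ * (Ψ v + ‖v‖ ^ 2 + 1)) :
    ∃ C' > (0 : ℝ), ∀ (u₁ u₂ : EuclideanSpace ℝ (Fin k)), ∀ s ∈ Icc (0 : ℝ) 1,
      ‖fderiv ℝ f (s • u₁ + (1 - s) • u₂)‖ ^ 2
        ≤ C' * (‖f u₁‖ ^ 2 + ‖f u₂‖ ^ 2 + ‖u₁‖ ^ 2 + ‖u₂‖ ^ 2 + 1) := by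
  refine ⟨3 * C ^ 2 * (3 + C₁ * (1 / C₂ + 3)) + 1, by positivity, ?_⟩
  intro u₁ u₂ s hs
  obtain ⟨hs0, hs1⟩ := hs
  set u := s • u₁ + (1 - s) • u₂ with hudef
  -- bound on ‖u‖
  have hnorm : ‖u‖ ≤ s * ‖u₁‖ + (1 - s) * ‖u₂‖ := by
    calc ‖u‖ ≤ ‖s • u₁‖ + ‖(1 - s) • u₂‖ := norm_add_le _ _
      _ = s * ‖u₁‖ + (1 - s) * ‖u₂‖ := by
          rw [norm_smul, norm_smul, Real.norm_of_nonneg hs0,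
            Real.norm_of_nonneg (by linarith)]
  have hu2 : ‖u‖ ^ 2 ≤ 2 * (‖u₁‖ ^ 2 + ‖u₂‖ ^ 2) := by
    have h1 : s * ‖u₁‖ + (1 - s) * ‖u₂‖ ≤ ‖u₁‖ + ‖u₂‖ := by
      nlinarith [norm_nonneg u₁, norm_nonneg u₂]
    have h2 : ‖u‖ ≤ ‖u₁‖ + ‖u₂‖ := hnorm.trans h1
    have h3 : ‖u‖ ^ 2 ≤ (‖u₁‖ + ‖u₂‖) ^ 2 := pow_le_pow_left₀ (norm_nonneg u) h2 2
    nlinarith [sq_nonneg (‖u₁‖ - ‖u₂‖)]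
  -- convexity of Ψ
  have hconv : Ψ u ≤ s * Ψ u₁ + (1 - s) * Ψ u₂ :=
    hΨ.2 (mem_univ u₁) (mem_univ u₂) hs0 (by linarith) (by ring)
  -- upper bound on Ψ from hlow
  have hB : ∀ v : EuclideanSpace ℝ (Fin k), Ψ v ≤ ‖f v‖ ^ 2 / C₂ + 1 + ‖v‖ ^ 2 := by
    intro v
    have h := hlow v
    have h2 : Ψ v - 1 - ‖v‖ ^ 2 ≤ ‖f v‖ ^ 2 / C₂ := by
      rw [le_div_iff₀ hC₂]; nlinarith
    linarith
  have hBnn : ∀ v : EuclideanSpace ℝ (Fin k),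
      (0:ℝ) ≤ ‖f v‖ ^ 2 / C₂ + 1 + ‖v‖ ^ 2 := fun v => by positivity
  have hΨu : Ψ u ≤ (‖f u₁‖ ^ 2 / C₂ + 1 + ‖u₁‖ ^ 2) + (‖f u₂‖ ^ 2 / C₂ + 1 + ‖u₂‖ ^ 2) := by
    have h1 := hB u₁
    have h2 := hB u₂
    nlinarith [hBnn u₁, hBnn u₂, mul_le_mul_of_nonneg_left h1 hs0,
      mul_le_mul_of_nonneg_left h2 (by linarith : (0:ℝ) ≤ 1 - s)]
  -- bound ‖f u‖²
  set D : ℝ := ‖f u₁‖ ^ 2 + ‖f u₂‖ ^ 2 + ‖u₁‖ ^ 2 + ‖u₂‖ ^ 2 + 1 with hDdef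
  have hD1 : (1:ℝ) ≤ D := by
    have : (0:ℝ) ≤ ‖f u₁‖ ^ 2 + ‖f u₂‖ ^ 2 + ‖u₁‖ ^ 2 + ‖u₂‖ ^ 2 := by positivity
    linarith
  have hfc : ‖f u‖ ^ 2 ≤ C₁ * (1 / C₂ + 3) * D := by
    have h := hup u
    have hΨD : Ψ u + ‖u‖ ^ 2 + 1 ≤ (1 / C₂ + 3) * D := by
      have hC₂' : (0:ℝ) < 1 / C₂ := by positivity
      have e1 : ‖f u₁‖ ^ 2 / C₂ = (1 / C₂) * ‖f u₁‖ ^ 2 := by ring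
      have e2 : ‖f u₂‖ ^ 2 / C₂ = (1 / C₂) * ‖f u₂‖ ^ 2 := by ring
      rw [e1, e2] at hΨu
      nlinarith [norm_nonneg (f u₁), norm_nonneg (f u₂), sq_nonneg ‖f u₁‖, sq_nonneg ‖f u₂‖,
        sq_nonneg ‖u₁‖, sq_nonneg ‖u₂‖]
    calc ‖f u‖ ^ 2 ≤ C₁ * (Ψ u + ‖u‖ ^ 2 + 1) := h
      _ ≤ C₁ * ((1 / C₂ + 3) * D) := by
          exact mul_le_mul_of_nonneg_left hΨD hC₁.le
      _ = C₁ * (1 / C₂ + 3) * D := by ring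
  -- bound derivative
  have hfd := hfp u
  have hsq : ‖fderiv ℝ f u‖ ^ 2 ≤ 3 * C ^ 2 * (1 + ‖f u‖ ^ 2 + ‖u‖ ^ 2) := by
    have h2 : ‖fderiv ℝ f u‖ ^ 2 ≤ (C * (1 + ‖f u‖ + ‖u‖)) ^ 2 :=
      pow_le_pow_left₀ (norm_nonneg _) hfd 2
    have h3 : (1 + ‖f u‖ + ‖u‖) ^ 2 ≤ 3 * (1 + ‖f u‖ ^ 2 + ‖u‖ ^ 2) := by
      nlinarith [sq_nonneg (1 - ‖f u‖), sq_nonneg (1 - ‖u‖), sq_nonneg (‖f u‖ - ‖u‖)]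
    calc ‖fderiv ℝ f u‖ ^ 2 ≤ (C * (1 + ‖f u‖ + ‖u‖)) ^ 2 := h2
      _ = C ^ 2 * (1 + ‖f u‖ + ‖u‖) ^ 2 := by ring
      _ ≤ C ^ 2 * (3 * (1 + ‖f u‖ ^ 2 + ‖u‖ ^ 2)) :=
          mul_le_mul_of_nonneg_left h3 (sq_nonneg C)
      _ = 3 * C ^ 2 * (1 + ‖f u‖ ^ 2 + ‖u‖ ^ 2) := by ring
  -- combine
  have hfinal : 1 + ‖f u‖ ^ 2 + ‖u‖ ^ 2 ≤ (3 + C₁ * (1 / C₂ + 3)) * D := by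
    nlinarith [hu2, hfc, hD1, norm_nonneg u₁, norm_nonneg u₂]
  calc ‖fderiv ℝ f u‖ ^ 2 ≤ 3 * C ^ 2 * (1 + ‖f u‖ ^ 2 + ‖u‖ ^ 2) := hsq
    _ ≤ 3 * C ^ 2 * ((3 + C₁ * (1 / C₂ + 3)) * D) := by
        exact mul_le_mul_of_nonneg_left hfinal (by positivity)
    _ ≤ (3 * C ^ 2 * (3 + C₁ * (1 / C₂ + 3)) + 1) * D := by
        nlinarith [hD1, sq_nonneg C, mul_pos hC₁ (by positivity : (0:ℝ) < 1 / C₂ + 3)]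
end
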